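/- Let x1, x2 ∈ [0,1] with x1 ≤ x2, let ε̃ ≥ 0, and let ε ∈ ℝ be such that x1+ε ∈ [0,1], x2−ε ∈ [0,1], and |ε| ≤ ε̃. Then h_D(x1,x2) − h_C(x1,x2;ε̃) ≤ h_D(x1+ε, x2−ε). -/

import Mathlib

/-!
Write `x1 + ε` and `x2 - ε` as `m ∓ (c - ε)` around the common midpoint `m = (x1 + x2) / 2`,
with `c = (x2 - x1) / 2`, so that `h_D(x1 + ε, x2 - ε) = 2 h_b(m) - h_b(m - (c - ε)) - h_b(m + (c - ε))`.
For a concave function, `f (m - u) + f (m + u)` decreases as `|u|` grows. Clamping `ε` to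
`ε' ∈ [0, c]` brings `c - ε` closer to `0`, and `ε' ≤ ε̃` makes `ε'` admissible in `h_C`.
-/

/-- Binary entropy function (base 2), with the convention `0 log 0 = 0`. -/
noncomputable def hb (x : ℝ) : ℝ := -(x * Real.logb 2 x) - (1 - x) * Real.logb 2 (1 - x)

/-- The function `h_D`. -/
noncomputable def hD (x1 x2 : ℝ) : ℝ := 2 * hb ((x1 + x2) / 2) - hb x1 - hb x2

/-- The function `h_C(x1, x2; ε)`. -/
noncomputable def hC (x1 x2 ε : ℝ) : ℝ :=
  sSup ((fun ε' => hb (min x1 x2 + ε') - hb (min x1 x2) + hb (max x1 x2 - ε') - hb (max x1 x2))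
    '' Set.Icc 0 (min ε ((max x1 x2 - min x1 x2) / 2)))

theorem ConcaveOn.add_le_add_of_abs_le {f : ℝ → ℝ} {s : Set ℝ} (hf : ConcaveOn ℝ s f)
    {m t u : ℝ} (hlo : m - u ∈ s) (hhi : m + u ∈ s) (htu : |t| ≤ |u|) :
    f (m - u) + f (m + u) ≤ f (m - t) + f (m + t) := by
  rcases eq_or_ne u 0 with rfl | hu
  · obtain rfl : t = 0 := abs_nonpos_iff.mp (by simpa using htu)
    rfl
  have hq : |t / u| ≤ 1 := by rw [abs_div, div_le_one (abs_pos.mpr hu)]; exact htu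
  obtain ⟨hq_ge, hq_le⟩ := abs_le.mp hq
  -- `m ∓ t` are the convex combinations of `m - u` and `m + u` with weights `(1 ± t/u)/2`
  have hp : (0 : ℝ) ≤ (1 + t / u) / 2 := by linarith
  have hn : (0 : ℝ) ≤ (1 - t / u) / 2 := by linarith
  have hsum : (1 + t / u) / 2 + (1 - t / u) / 2 = 1 := by ring
  have hle := hf.2 hlo hhi hp hn hsum
  have hri := hf.2 hlo hhi hn hp (by linarith)
  have elo : (1 + t / u) / 2 * (m - u) + (1 - t / u) / 2 * (m + u) = m - t := by
    field_simp; ring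
  have ehi : (1 - t / u) / 2 * (m - u) + (1 + t / u) / 2 * (m + u) = m + t := by
    field_simp; ring
  simp only [smul_eq_mul, elo, ehi] at hle hri
  linarith

theorem hb_eq_smul_binEntropy : hb = (Real.log 2)⁻¹ • Real.binEntropy := by
  ext x
  simp only [hb, Real.binEntropy, Real.logb, Pi.smul_apply, smul_eq_mul, Real.log_inv]
  ring

@[fun_prop]
theorem continuous_hb : Continuous hb := by
  rw [hb_eq_smul_binEntropy]
  exact Real.binEntropy_continuous.const_smul _

theorem concaveOn_hb : ConcaveOn ℝ (Set.Icc 0 1) hb := by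
  rw [hb_eq_smul_binEntropy]
  exact Real.strictConcave_binEntropy.concaveOn.smul (inv_nonneg.2 (Real.log_nonneg one_le_two))

theorem le_hC {x1 x2 εt ε' : ℝ} (hx12 : x1 ≤ x2)
    (hε' : ε' ∈ Set.Icc 0 (min εt ((x2 - x1) / 2))) :
    hb (x1 + ε') - hb x1 + hb (x2 - ε') - hb x2 ≤ hC x1 x2 εt := by
  rw [hC, min_eq_left hx12, max_eq_right hx12]
  exact le_csSup ((isCompact_Icc.image (by fun_prop)).bddAbove) ⟨ε', hε', rfl⟩

theorem abs_sub_clamp_le {c ε : ℝ} (hc : 0 ≤ c) : |c - max 0 (min ε c)| ≤ |c - ε| := by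
  rcases le_total ε c with hεc | hcε
  · rw [min_eq_left hεc]
    rcases le_total ε 0 with hε0 | hε0
    · rw [max_eq_left hε0, sub_zero, abs_of_nonneg hc, abs_of_nonneg (by linarith)]
      linarith
    · rw [max_eq_right hε0]
  · rw [min_eq_right hcε, max_eq_right hc, sub_self, abs_zero]
    exact abs_nonneg _

theorem hD_sub_hC_le_general (x1 x2 εt ε : ℝ) (hx12 : x1 ≤ x2) (hεt : 0 ≤ εt)
    (h1 : x1 + ε ∈ Set.Icc (0:ℝ) 1) (h2 : x2 - ε ∈ Set.Icc (0:ℝ) 1)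
    (hε : |ε| ≤ εt) :
    hD x1 x2 - hC x1 x2 εt ≤ hD (x1 + ε) (x2 - ε) := by
  set c := (x2 - x1) / 2
  set m := (x1 + x2) / 2
  set ε' := max 0 (min ε c)
  have hc : 0 ≤ c := by simp only [c]; linarith
  have hε' : ε' ∈ Set.Icc 0 (min εt c) :=
    ⟨le_max_left _ _, max_le (le_min hεt hc)
      (le_min ((min_le_left _ _).trans ((le_abs_self ε).trans hε)) (min_le_right _ _))⟩
  have hspread : hb (m - (c - ε)) + hb (m + (c - ε)) ≤ hb (m - (c - ε')) + hb (m + (c - ε')) :=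
    concaveOn_hb.add_le_add_of_abs_le (by convert h1 using 1; ring) (by convert h2 using 1; ring)
      (abs_sub_clamp_le hc)
  have hD_eq : hD (x1 + ε) (x2 - ε) = 2 * hb m - hb (m - (c - ε)) - hb (m + (c - ε)) := by
    simp only [hD, m, c]; ring_nf
  have hsup : hb (m - (c - ε')) - hb x1 + hb (m + (c - ε')) - hb x2 ≤ hC x1 x2 εt := by
    simp only [m, c]; convert le_hC hx12 hε' using 5 <;> ring
  rw [hD_eq, hD]
  linarith

theorem hD_sub_hC_le (x1 x2 εt ε : ℝ) (hx1 : x1 ∈ Set.Icc (0:ℝ) 1)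
    (hx2 : x2 ∈ Set.Icc (0:ℝ) 1) (hx12 : x1 ≤ x2) (hεt : 0 ≤ εt)
    (h1 : x1 + ε ∈ Set.Icc (0:ℝ) 1) (h2 : x2 - ε ∈ Set.Icc (0:ℝ) 1)
    (hε : |ε| ≤ εt) :
    hD x1 x2 - hC x1 x2 εt ≤ hD (x1 + ε) (x2 - ε) :=
  hD_sub_hC_le_general x1 x2 εt ε hx12 hεt h1 h2 hε
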